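/- Suppose a filtered *-algebra A with faithful state σ satisfies the Haagerup-type condition: there is a constant C such that ‖P_m a_k P_n‖ ≤ C‖a_k‖₂ for all a ∈ A and integers m, n, k, where a_k = P_k(a). Then for every a ∈ A and every k, ‖a_k‖ ≤ C(2k+1)‖a_k‖₂, where ‖·‖ is the operator norm and ‖·‖₂ the GNS norm. -/

import Mathlib

variable {A : Type*} [Ring A] [Algebra ℂ A] [StarRing A]

/-- The `L²`-norm of `x ∈ A` coming from the state `σ`: `‖x‖₂ = √(σ(x*x))`. -/
noncomputable def l2norm (σ : A →ₗ[ℂ] ℂ) (x : A) : ℝ := Real.sqrt (σ (star x * x)).re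

/-- The successive orthogonal differences of the filtration `F`, computed inside `A`
with respect to the `σ`-inner product `⟨x, y⟩ = σ(x* y)`:
`E 0 = A_0` and `E (n+1) = A_{n+1} ⊖ A_n`. -/
def Ediff (σ : A →ₗ[ℂ] ℂ) (F : ℕ → Submodule ℂ A) : ℕ → Set A
  | 0 => F 0
  | (n + 1) => {x | x ∈ F (n + 1) ∧ ∀ y ∈ F n, σ (star y * x) = 0}

/-- `P` is the family of orthogonal projections of `A` (with its `σ`-inner product)
onto the successive differences `Ediff σ F n` of the filtration `F`:
each `P n` has range in `E_n`, fixes `E_n`, kills `E_m` for `m ≠ n`, and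
every element of `A_N` is the sum of its components `P 0 x, …, P N x`. -/
def IsProjFamily (σ : A →ₗ[ℂ] ℂ) (F : ℕ → Submodule ℂ A) (P : ℕ → A →ₗ[ℂ] A) : Prop :=
  (∀ n x, P n x ∈ Ediff σ F n) ∧
  (∀ n, ∀ x ∈ Ediff σ F n, P n x = x) ∧
  (∀ m n : ℕ, m ≠ n → ∀ x ∈ Ediff σ F m, P n x = 0) ∧
  (∀ N : ℕ, ∀ x ∈ F N, x = ∑ n ∈ Finset.range (N + 1), P n x)

/-- `(A, σ, F)` is a *-filtration of the unital *-algebra `A` by finite-dimensional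
subspaces, with `A_0 = ℂ1`, and `σ` is a faithful tracial state on `A`. -/
def IsFilteredStarAlgWithState (σ : A →ₗ[ℂ] ℂ) (F : ℕ → Submodule ℂ A) : Prop :=
  Monotone F ∧
  (∀ a : A, ∃ n, a ∈ F n) ∧
  (∀ n, ∀ a ∈ F n, star a ∈ F n) ∧
  (∀ m n : ℕ, ∀ a ∈ F m, ∀ b ∈ F n, a * b ∈ F (m + n)) ∧
  (F 0 = Submodule.span ℂ {1}) ∧
  (∀ n, FiniteDimensional ℂ (F n)) ∧
  σ 1 = 1 ∧
  (∀ a : A, a ≠ 0 → 0 < (σ (star a * a)).re ∧ (σ (star a * a)).im = 0) ∧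
  (∀ a b : A, σ (a * b) = σ (b * a))

/-- The Haagerup-type condition with constant `C`: `‖P_m a_k P_n‖ ≤ C ‖a_k‖₂`,
expressed concretely: for every `a ∈ E_k` and every `ξ ∈ E_n`,
`‖P_m (a ξ)‖₂ ≤ C ‖a‖₂ ‖ξ‖₂`. -/
def HaagerupTypeCond (σ : A →ₗ[ℂ] ℂ) (F : ℕ → Submodule ℂ A) (P : ℕ → A →ₗ[ℂ] A)
    (C : ℝ) : Prop :=
  ∀ k m n : ℕ, ∀ a ∈ Ediff σ F k, ∀ ξ ∈ Ediff σ F n,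
    l2norm σ (P m (a * ξ)) ≤ C * l2norm σ a * l2norm σ ξ

/-!
Write `ξ = ∑ₙ ξₙ` with `ξₙ = Pₙ ξ`. Because `A_k A_n ⊆ A_{k+n}` and `A_k^* A_m ⊆ A_{k+m}`, the
component `P_m (a_k ξₙ)` vanishes unless `|m - n| ≤ k`: the matrix `(P_m a_k P_n)` is a band matrix
whose rows and columns have at most `2k + 1` nonzero entries, each of norm `≤ C ‖a_k‖₂`.
Cauchy–Schwarz along the rows and Pythagoras in the GNS space then give
`‖a_k ξ‖₂² ≤ ((2k + 1) C ‖a_k‖₂)² ∑ₙ ‖ξₙ‖₂² = ((2k + 1) C ‖a_k‖₂ ‖ξ‖₂)²`.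
-/

open Finset ComplexConjugate
open scoped ComplexOrder

theorem sum_sq_sum_filter_le {ι κ : Type*} (M : Finset ι) (R : Finset κ) (r : ι → κ → Prop)
    [DecidableRel r] {L : ℕ} (hrow : ∀ m ∈ M, #{n ∈ R | r m n} ≤ L)
    (hcol : ∀ n ∈ R, #{m ∈ M | r m n} ≤ L) (x : κ → ℝ) :
    ∑ m ∈ M, (∑ n ∈ R with r m n, x n) ^ 2 ≤ (L : ℝ) ^ 2 * ∑ n ∈ R, x n ^ 2 := calc
  _ ≤ ∑ m ∈ M, (L : ℝ) * ∑ n ∈ R with r m n, x n ^ 2 := by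
    gcongr with m hm
    exact sq_sum_le_card_mul_sum_sq.trans (by gcongr; exact_mod_cast hrow m hm)
  _ = L * ∑ n ∈ R, (#{m ∈ M | r m n} : ℝ) * x n ^ 2 := by
    simp_rw [← mul_sum, sum_filter, card_filter, Nat.cast_sum, sum_mul, Nat.cast_ite]
    rw [sum_comm]
    simp
  _ ≤ L * ∑ n ∈ R, (L : ℝ) * x n ^ 2 := by
    gcongr with n hn
    exact_mod_cast hcol n hn
  _ = (L : ℝ) ^ 2 * ∑ n ∈ R, x n ^ 2 := by rw [← mul_sum]; ring

theorem card_filter_le_two_mul_add_one (s : Finset ℕ) (c k : ℕ) :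
    #{i ∈ s | i ≤ c + k ∧ c ≤ i + k} ≤ 2 * k + 1 := calc
  _ ≤ #(Icc (c - k) (c + k)) := card_le_card fun i hi => by
    simp only [mem_filter, mem_Icc] at hi ⊢; omega
  _ ≤ 2 * k + 1 := by simp only [Nat.card_Icc]; omega

theorem Complex.eq_conj_of_additive {ψ : ℂ → ℂ} (hadd : ∀ c d, ψ (c + d) = ψ c + ψ d)
    (hone : ψ 1 = 1) (him : ∀ c, (ψ c * c).im = 0) (c : ℂ) : ψ c = conj c := by
  have him_eq : ∀ c, (ψ c).im = -c.im := fun c => by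
    have := him (1 + c)
    simp only [hadd, hone, add_mul, one_mul, mul_add, mul_one, add_im, one_im, him c] at this
    linarith
  have hre_eq : ∀ c, c.im ≠ 0 → (ψ c).re = c.re := fun c hc => by
    have h := him c
    rw [mul_im, him_eq] at h
    exact mul_right_cancel₀ hc (by linarith : (ψ c).re * c.im = c.re * c.im)
  refine Complex.ext ?_ (by simp [him_eq])
  rw [conj_re]
  by_cases hc : c.im = 0
  · have h1 := hre_eq (c + I) (by simp [hc])
    have h2 := hre_eq I (by simp)
    rw [hadd, add_re] at h1
    simp only [add_re, I_re] at h1 h2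
    linarith
  · exact hre_eq c hc

/-- The star of `A` is only assumed additive and anti-multiplicative; conjugate-linearity is forced
by positivity of `σ` on the `*`-closed line `ℂ1`. -/
theorem starModule_of_state (σ : A →ₗ[ℂ] ℂ) (hone : σ 1 = 1)
    (hstar : ∀ a ∈ Submodule.span ℂ {(1 : A)}, star a ∈ Submodule.span ℂ {(1 : A)})
    (hσ : ∀ a : A, 0 ≤ σ (star a * a)) : StarModule ℂ A := by
  have hσ_alg : ∀ c, σ (algebraMap ℂ A c) = c := fun c => by
    rw [Algebra.algebraMap_eq_smul_one, map_smul, hone, smul_eq_mul, mul_one]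
  set ψ : ℂ → ℂ := fun c => σ (star (algebraMap ℂ A c))
  have hψ : ∀ c, star (algebraMap ℂ A c) = algebraMap ℂ A (ψ c) := fun c => by
    obtain ⟨d, hd⟩ := Submodule.mem_span_singleton.mp
      (hstar _ (Submodule.mem_span_singleton.mpr ⟨c, (Algebra.algebraMap_eq_smul_one c).symm⟩))
    rw [← Algebra.algebraMap_eq_smul_one] at hd
    simp only [ψ, ← hd, hσ_alg]
  have hψ_conj : ∀ c, ψ c = conj c := by
    refine Complex.eq_conj_of_additive (fun c d => by simp [ψ]) (by simp [ψ, hone]) fun c => ?_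
    have := (Complex.nonneg_iff.mp (hσ (algebraMap ℂ A c))).2
    rwa [hψ, ← map_mul, hσ_alg, eq_comm] at this
  refine ⟨fun c x => ?_⟩
  rw [Algebra.smul_def, Algebra.smul_def, star_mul, hψ, hψ_conj, Algebra.commutes]; rfl

theorem l2norm_nonneg (σ : A →ₗ[ℂ] ℂ) (x : A) : 0 ≤ l2norm σ x := Real.sqrt_nonneg _

section PositiveState

variable (σ : A →ₗ[ℂ] ℂ) (hσ : ∀ a : A, 0 ≤ σ (star a * a))
include hσ

theorem im_state_star_mul_add_star_mul (x y : A) :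
    (σ (star x * y) + σ (star y * x)).im = 0 := by
  have h := (Complex.nonneg_iff.mp (hσ (x + y))).2
  have hx := (Complex.nonneg_iff.mp (hσ x)).2
  have hy := (Complex.nonneg_iff.mp (hσ y)).2
  simp only [star_add, add_mul, mul_add, map_add, Complex.add_im] at h hx hy ⊢
  linarith

theorem conj_state_star_mul [StarModule ℂ A] (x y : A) :
    conj (σ (star x * y)) = σ (star y * x) := by
  have h1 := im_state_star_mul_add_star_mul σ hσ x y
  have h2 := im_state_star_mul_add_star_mul σ hσ x (Complex.I • y)
  simp only [star_smul, Complex.star_def, Complex.conj_I, mul_smul_comm, smul_mul_assoc, map_smul,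
    smul_eq_mul, Complex.add_im, Complex.mul_im, Complex.I_re, Complex.I_im, Complex.neg_re,
    Complex.neg_im] at h1 h2
  apply Complex.ext <;> simp only [Complex.conj_re, Complex.conj_im] <;> linarith

noncomputable abbrev statePreInnerCore [StarModule ℂ A] : PreInnerProductSpace.Core ℂ A where
  inner x y := σ (star x * y)
  conj_inner_symm x y := conj_state_star_mul σ hσ y x
  re_inner_nonneg x := (Complex.nonneg_iff.mp (hσ x)).1
  add_left x y z := by simp only [star_add, add_mul, map_add]
  smul_left x y r := by simp only [star_smul, smul_mul_assoc, map_smul, smul_eq_mul, Complex.star_def]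

theorem l2norm_sum_le [StarModule ℂ A] {ι : Type*} (s : Finset ι) (f : ι → A) :
    l2norm σ (∑ i ∈ s, f i) ≤ ∑ i ∈ s, l2norm σ (f i) :=
  letI := InnerProductSpace.Core.toSeminormedAddCommGroup (c := statePreInnerCore σ hσ)
  norm_sum_le s f

theorem l2norm_sum_sq_of_orthogonal {ι : Type*} (s : Finset ι) (f : ι → A)
    (horth : ∀ i ∈ s, ∀ j ∈ s, i ≠ j → σ (star (f i) * f j) = 0) :
    l2norm σ (∑ i ∈ s, f i) ^ 2 = ∑ i ∈ s, l2norm σ (f i) ^ 2 := by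
  have hre : ∀ a : A, 0 ≤ (σ (star a * a)).re := fun a => (Complex.nonneg_iff.mp (hσ a)).1
  have hdiag : σ (star (∑ i ∈ s, f i) * ∑ i ∈ s, f i) = ∑ i ∈ s, σ (star (f i) * f i) := by
    rw [star_sum, sum_mul_sum, map_sum]
    refine sum_congr rfl fun i hi => ?_
    rw [map_sum, sum_eq_single_of_mem i hi fun j hj hji => horth i hi j hj hji.symm]
  rw [l2norm, Real.sq_sqrt (hre _), hdiag, Complex.re_sum]
  simp only [l2norm, Real.sq_sqrt (hre _)]

end PositiveState

theorem Ediff_subset (σ : A →ₗ[ℂ] ℂ) (F : ℕ → Submodule ℂ A) (n : ℕ) :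
    Ediff σ F n ⊆ F n := by
  cases n with
  | zero => exact fun _ hx => hx
  | succ n => exact fun _ hx => hx.1

theorem state_star_mul_eq_zero_of_lt {σ : A →ₗ[ℂ] ℂ} {F : ℕ → Submodule ℂ A} (hF : Monotone F)
    {m n : ℕ} (hmn : m < n) {x y : A} (hx : x ∈ F m) (hy : y ∈ Ediff σ F n) :
    σ (star x * y) = 0 := by
  obtain ⟨n, rfl⟩ : ∃ j, n = j + 1 := ⟨n - 1, by omega⟩
  exact hy.2 x (hF (by omega) hx)

namespace IsFilteredStarAlgWithState

variable {σ : A →ₗ[ℂ] ℂ} {F : ℕ → Submodule ℂ A} (hfilt : IsFilteredStarAlgWithState σ F)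
include hfilt

theorem state_star_mul_self_nonneg (a : A) : 0 ≤ σ (star a * a) := by
  obtain ⟨-, -, -, -, -, -, -, hpos, -⟩ := hfilt
  obtain rfl | ha := eq_or_ne a 0
  · simp
  · exact Complex.nonneg_iff.mpr ⟨(hpos a ha).1.le, (hpos a ha).2.symm⟩

theorem eq_zero_of_state_star_mul_self_eq_zero {a : A} (ha : σ (star a * a) = 0) : a = 0 := by
  obtain ⟨-, -, -, -, -, -, -, hpos, -⟩ := hfilt
  by_contra hne
  simpa [ha] using (hpos a hne).1

theorem starModule : StarModule ℂ A := by
  have ⟨_, _, hstar, _, hspan, _, hone, _⟩ := hfilt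
  exact starModule_of_state σ hone (hspan ▸ hstar 0) hfilt.state_star_mul_self_nonneg

theorem state_star_mul_eq_zero_of_ne {m n : ℕ} (hmn : m ≠ n) {x y : A}
    (hx : x ∈ Ediff σ F m) (hy : y ∈ Ediff σ F n) : σ (star x * y) = 0 := by
  rcases hmn.lt_or_gt with hlt | hgt
  · exact state_star_mul_eq_zero_of_lt hfilt.1 hlt (Ediff_subset σ F m hx) hy
  · have := hfilt.starModule
    rw [← conj_state_star_mul σ hfilt.state_star_mul_self_nonneg,
      state_star_mul_eq_zero_of_lt hfilt.1 hgt (Ediff_subset σ F n hy) hx, map_zero]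

end IsFilteredStarAlgWithState

namespace IsProjFamily

variable {σ : A →ₗ[ℂ] ℂ} {F : ℕ → Submodule ℂ A} {P : ℕ → A →ₗ[ℂ] A}
  (hfilt : IsFilteredStarAlgWithState σ F) (hproj : IsProjFamily σ F P)
include hfilt hproj

theorem state_star_proj_mul (m : ℕ) (x : A) :
    σ (star (P m x) * x) = σ (star (P m x) * P m x) := by
  have ⟨hmono, hexh, _⟩ := hfilt
  obtain ⟨N, hN⟩ := hexh x
  have hx : x ∈ F (N + m) := hmono (Nat.le_add_right N m) hN
  nth_rw 2 [hproj.2.2.2 (N + m) x hx]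
  rw [mul_sum, map_sum]
  refine sum_eq_single_of_mem m (mem_range.mpr (by omega)) fun j _ hjm => ?_
  exact hfilt.state_star_mul_eq_zero_of_ne hjm.symm (hproj.1 m x) (hproj.1 j x)

theorem proj_eq_zero_of_orthogonal {m : ℕ} {x : A}
    (hx : ∀ y ∈ Ediff σ F m, σ (star y * x) = 0) : P m x = 0 :=
  hfilt.eq_zero_of_state_star_mul_self_eq_zero <| by
    rw [← hproj.state_star_proj_mul hfilt, hx _ (hproj.1 m x)]

theorem proj_mul_eq_zero_of_far {k m n : ℕ} (hfar : ¬(n ≤ m + k ∧ m ≤ n + k)) {b y : A}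
    (hb : b ∈ Ediff σ F k) (hy : y ∈ Ediff σ F n) : P m (b * y) = 0 := by
  have ⟨hmono, _, hstar, hmul, _⟩ := hfilt
  refine hproj.proj_eq_zero_of_orthogonal hfilt fun w hw => ?_
  have hbF := Ediff_subset σ F k hb
  have hwF := Ediff_subset σ F m hw
  rcases not_and_or.mp hfar with hnear | hnear
  · have := state_star_mul_eq_zero_of_lt hmono (by omega)
      (hmul k m _ (hstar k b hbF) w hwF) hy
    rwa [star_mul, star_star, mul_assoc] at this
  · have := hfilt.starModule
    rw [← conj_state_star_mul σ hfilt.state_star_mul_self_nonneg,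
      state_star_mul_eq_zero_of_lt hmono (by omega)
        (hmul k n b hbF y (Ediff_subset σ F n hy)) hw, map_zero]

theorem proj_mul_eq_sum_filter {k N : ℕ} {b ξ : A} (hb : b ∈ Ediff σ F k) (hξ : ξ ∈ F N)
    (m : ℕ) :
    P m (b * ξ) = ∑ n ∈ range (N + 1) with n ≤ m + k ∧ m ≤ n + k, P m (b * P n ξ) := by
  conv_lhs => rw [hproj.2.2.2 N ξ hξ, mul_sum, map_sum]
  rw [sum_filter_of_ne fun n _ hne => ?_]
  by_contra hfar
  exact hne (hproj.proj_mul_eq_zero_of_far hfilt hfar hb (hproj.1 n ξ))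

theorem l2norm_sq_eq_sum_sq_proj {N : ℕ} {x : A} (hx : x ∈ F N) :
    l2norm σ x ^ 2 = ∑ n ∈ range (N + 1), l2norm σ (P n x) ^ 2 := by
  conv_lhs => rw [hproj.2.2.2 N x hx]
  exact l2norm_sum_sq_of_orthogonal σ hfilt.state_star_mul_self_nonneg _ _
    fun i _ j _ hij => hfilt.state_star_mul_eq_zero_of_ne hij (hproj.1 i x) (hproj.1 j x)

end IsProjFamily

namespace HaagerupTypeCond

variable {σ : A →ₗ[ℂ] ℂ} {F : ℕ → Submodule ℂ A} {P : ℕ → A →ₗ[ℂ] A} {C : ℝ}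
  (hHaag : HaagerupTypeCond σ F P C) (hfilt : IsFilteredStarAlgWithState σ F)
  (hproj : IsProjFamily σ F P)
include hHaag hfilt hproj

theorem one_le : 1 ≤ C := by
  obtain ⟨-, -, -, -, hspan, -, hone, -⟩ := hfilt
  have h1 : (1 : A) ∈ Ediff σ F 0 := by
    change (1 : A) ∈ F 0
    rw [hspan]
    exact Submodule.mem_span_singleton_self 1
  have hnorm : l2norm σ (1 : A) = 1 := by simp [l2norm, hone]
  simpa [hproj.2.1 0 1 h1, hnorm] using hHaag 0 0 0 1 h1 1 h1

theorem l2norm_proj_mul_le {k N : ℕ} {b ξ : A} (hb : b ∈ Ediff σ F k) (hξ : ξ ∈ F N)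
    (m : ℕ) : l2norm σ (P m (b * ξ)) ≤
      C * l2norm σ b * ∑ n ∈ range (N + 1) with n ≤ m + k ∧ m ≤ n + k, l2norm σ (P n ξ) := by
  have := hfilt.starModule
  rw [hproj.proj_mul_eq_sum_filter hfilt hb hξ, mul_sum]
  exact (l2norm_sum_le σ hfilt.state_star_mul_self_nonneg _ _).trans
    (sum_le_sum fun n _ => hHaag k m n _ hb _ (hproj.1 n ξ))

theorem l2norm_mul_sq_le {k : ℕ} {b : A} (hb : b ∈ Ediff σ F k) (ξ : A) :
    l2norm σ (b * ξ) ^ 2 ≤ (C * (2 * k + 1) * l2norm σ b * l2norm σ ξ) ^ 2 := by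
  have ⟨_, hexh, _, hmul, _⟩ := hfilt
  obtain ⟨N, hξ⟩ := hexh ξ
  calc
    _ = ∑ m ∈ range (k + N + 1), l2norm σ (P m (b * ξ)) ^ 2 :=
      hproj.l2norm_sq_eq_sum_sq_proj hfilt (hmul k N _ (Ediff_subset σ F k hb) ξ hξ)
    _ ≤ ∑ m ∈ range (k + N + 1), (C * l2norm σ b) ^ 2 *
          (∑ n ∈ range (N + 1) with n ≤ m + k ∧ m ≤ n + k, l2norm σ (P n ξ)) ^ 2 := by
      gcongr with m
      rw [← mul_pow]
      exact pow_le_pow_left₀ (l2norm_nonneg σ _) (hHaag.l2norm_proj_mul_le hfilt hproj hb hξ m) 2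
    _ ≤ (C * l2norm σ b) ^ 2 *
          (((2 * k + 1 : ℕ) : ℝ) ^ 2 * ∑ n ∈ range (N + 1), l2norm σ (P n ξ) ^ 2) := by
      rw [← mul_sum]
      gcongr
      exact sum_sq_sum_filter_le _ _ (fun m n => n ≤ m + k ∧ m ≤ n + k)
        (fun m _ => card_filter_le_two_mul_add_one _ m k)
        (fun n _ => by simpa only [and_comm] using card_filter_le_two_mul_add_one _ n k) _
    _ = _ := by
      rw [← hproj.l2norm_sq_eq_sum_sq_proj hfilt hξ]
      push_cast
      ring

end HaagerupTypeCond

/-- Under the Haagerup-type condition with constant `C`, for every `a ∈ A` and every `k`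
the component `a_k = P_k a` satisfies the operator-norm bound
`‖a_k‖ ≤ C(2k+1)‖a_k‖₂`, i.e. `‖a_k ξ‖₂ ≤ C(2k+1)‖a_k‖₂‖ξ‖₂` for every `ξ ∈ A`. -/
theorem stmt_4 (σ : A →ₗ[ℂ] ℂ) (F : ℕ → Submodule ℂ A) (P : ℕ → A →ₗ[ℂ] A) (C : ℝ)
    (hfilt : IsFilteredStarAlgWithState σ F)
    (hproj : IsProjFamily σ F P)
    (hHaag : HaagerupTypeCond σ F P C) :
    ∀ (a : A) (k : ℕ) (ξ : A),
      l2norm σ (P k a * ξ) ≤ C * (2 * (k : ℝ) + 1) * l2norm σ (P k a) * l2norm σ ξ := by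
  intro a k ξ
  have hC : 0 ≤ C := zero_le_one.trans (hHaag.one_le hfilt hproj)
  have hnonneg : 0 ≤ C * (2 * (k : ℝ) + 1) * l2norm σ (P k a) * l2norm σ ξ := by
    have := l2norm_nonneg σ (P k a)
    have := l2norm_nonneg σ ξ
    positivity
  exact (pow_le_pow_iff_left₀ (l2norm_nonneg σ _) hnonneg two_ne_zero).mp
    (hHaag.l2norm_mul_sq_le hfilt hproj (hproj.1 k a) ξ)
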